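/- Let 0 < β < 1, t₀ > 0 and 0 < δ < 1/2. If s_N > (2/β)·artanh( tan(πβ(1 − 2δ)/2) / tan(πβ/2) ) + ln t₀, then ∫_{s_N}^{∞} f_RQ(s) ds < δ. -/

import Mathlib

/-!
With `u = β (s - ln t₀) / 2` and `a = πβ/2`, the half-angle formulas turn `f_RQ` into
`sin a cos a / (2π (sinh² u + cos² a))`, which is the derivative of
`F(s) = arctan (tanh u · tan a) / (πβ)`. Since `f_RQ ≥ 0` and `F → a / (πβ) = 1/2` at `+∞`, the
tail integral is `1/2 - F(s_N)`. Inverting `arctan` and `tanh`, the hypothesis on `s_N` says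
exactly that `F(s_N) > θ / (πβ) = 1/2 - δ` for `θ = πβ(1 - 2δ)/2`.
-/

open MeasureTheory Real

noncomputable def fRQ (β t₀ : ℝ) (s : ℝ) : ℝ :=
  Real.sin (β * π) / (2 * π * (Real.cosh (β * (s - Real.log t₀)) + Real.cos (β * π)))

noncomputable def artanh (x : ℝ) : ℝ := (1 / 2) * Real.log ((1 + x) / (1 - x))

open Filter Topology

namespace Real

theorem hasDerivAt_tanh (x : ℝ) : HasDerivAt tanh (1 / cosh x ^ 2) x := by
  have h := (hasDerivAt_sinh x).div (hasDerivAt_cosh x) (cosh_pos x).ne'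
  rw [show sinh / cosh = tanh from funext fun y => (tanh_eq_sinh_div_cosh y).symm] at h
  refine h.congr_deriv ?_
  rw [← cosh_sq_sub_sinh_sq x]
  ring

theorem tendsto_tanh_atTop : Tendsto tanh atTop (𝓝 1) := by
  have h : Tendsto (fun x : ℝ => 1 - 2 / (exp (2 * x) + 1)) atTop (𝓝 (1 - 0)) :=
    tendsto_const_nhds.sub <| tendsto_const_nhds.div_atTop <| tendsto_atTop_add_const_right _ 1 <|
      tendsto_exp_atTop.comp <| tendsto_id.const_mul_atTop two_pos
  rw [sub_zero] at h
  refine h.congr fun x => ?_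
  have : exp (2 * x) = exp x * exp x := by rw [← exp_add]; ring_nf
  rw [tanh_eq, exp_neg, this]
  field_simp
  ring

theorem lt_tanh_of_artanh_lt {x u : ℝ} (hx : x ∈ Set.Ioo (-1) 1) (h : artanh x < u) :
    x < tanh u := by
  rw [← artanh_tanh u] at h
  exact (strictMonoOn_artanh.lt_iff_lt hx ⟨neg_one_lt_tanh u, tanh_lt_one u⟩).mp h

end Real

theorem artanh_eq_real_artanh {x : ℝ} (hx : x ∈ Set.Icc (-1) 1) :
    _root_.artanh x = Real.artanh x :=
  (Real.artanh_eq_half_log hx).symm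

noncomputable def fRQPrimitive (β t₀ s : ℝ) : ℝ :=
  arctan (tanh (β * (s - log t₀) / 2) * tan (π * β / 2)) / (π * β)

theorem fRQ_eq_half_angle (β t₀ s : ℝ) :
    fRQ β t₀ s = sin (π * β / 2) * cos (π * β / 2) /
      (2 * π * (sinh (β * (s - log t₀) / 2) ^ 2 + cos (π * β / 2) ^ 2)) := by
  set a := π * β / 2
  set u := β * (s - log t₀) / 2
  have hnum : sin (β * π) = 2 * (sin a * cos a) := by
    rw [show β * π = 2 * a by ring, sin_two_mul, mul_assoc]
  have hden : 2 * π * (cosh (β * (s - log t₀)) + cos (β * π)) =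
      2 * (2 * π * (sinh u ^ 2 + cos a ^ 2)) := by
    rw [show β * π = 2 * a by ring, show β * (s - log t₀) = 2 * u by ring, cos_two_mul,
      cosh_two_mul, cosh_sq]
    ring
  rw [fRQ, hnum, hden, mul_div_mul_left _ _ two_ne_zero]

theorem hasDerivAt_fRQPrimitive {β : ℝ} (t₀ s : ℝ) (hβ : β ≠ 0) (hcos : cos (π * β / 2) ≠ 0) :
    HasDerivAt (fRQPrimitive β t₀) (fRQ β t₀ s) s := by
  have hinner : HasDerivAt (fun s => β * (s - log t₀) / 2) (β / 2) s := by
    simpa using (((hasDerivAt_id s).sub_const (log t₀)).const_mul β).div_const 2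
  refine ((((hasDerivAt_tanh _).comp s hinner).mul_const (tan (π * β / 2))).arctan.div_const
    (π * β)).congr_deriv ?_
  rw [Function.comp_apply, fRQ_eq_half_angle, tanh_eq_sinh_div_cosh, tan_eq_sin_div_cos]
  have hpyth := sin_sq_add_cos_sq (π * β / 2)
  have hhyp := cosh_sq_sub_sinh_sq (β * (s - log t₀) / 2)
  have hch := (cosh_pos (β * (s - log t₀) / 2)).ne'
  generalize sin (π * β / 2) = S, cos (π * β / 2) = C, sinh (β * (s - log t₀) / 2) = sh,
    cosh (β * (s - log t₀) / 2) = ch at *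
  have hden : 0 < sh ^ 2 + C ^ 2 := by positivity
  field_simp
  linear_combination (-S * C ^ 2) * hhyp + (-S * sh ^ 2) * hpyth

theorem tendsto_fRQPrimitive_atTop {β : ℝ} (t₀ : ℝ) (hβ₀ : 0 < β) (hβ₁ : β < 1) :
    Tendsto (fRQPrimitive β t₀) atTop (𝓝 (1 / 2)) := by
  have ha : π * β / 2 ∈ Set.Ioo (-(π / 2)) (π / 2) := by
    constructor <;> nlinarith [pi_pos]
  have hu : Tendsto (fun s => β * (s - log t₀) / 2) atTop atTop :=
    ((tendsto_atTop_add_const_right _ (-log t₀) tendsto_id).const_mul_atTop hβ₀).atTop_div_const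
      two_pos
  have h := ((continuous_arctan.tendsto _).comp
    ((tendsto_tanh_atTop.comp hu).mul_const (tan (π * β / 2)))).div_const (π * β)
  rw [one_mul, arctan_tan ha.1 ha.2, div_div_cancel_left' (by positivity), ← one_div] at h
  exact h

theorem fRQ_nonneg {β : ℝ} (t₀ s : ℝ) (hβ₀ : 0 ≤ β) (hβ₁ : β ≤ 1) : 0 ≤ fRQ β t₀ s := by
  have hsin : 0 ≤ sin (β * π) :=
    sin_nonneg_of_nonneg_of_le_pi (by positivity) (by nlinarith [pi_pos])
  have hcosh := one_le_cosh (β * (s - log t₀))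
  have hcos := neg_one_le_cos (β * π)
  exact div_nonneg hsin (mul_nonneg (by positivity) (by linarith))

theorem integral_Ioi_fRQ {β : ℝ} (t₀ a : ℝ) (hβ₀ : 0 < β) (hβ₁ : β < 1) :
    ∫ s in Set.Ioi a, fRQ β t₀ s = 1 / 2 - fRQPrimitive β t₀ a := by
  have hcos : cos (π * β / 2) ≠ 0 :=
    (cos_pos_of_mem_Ioo ⟨by nlinarith [pi_pos], by nlinarith [pi_pos]⟩).ne'
  exact integral_Ioi_of_hasDerivAt_of_nonneg'
    (fun s _ => hasDerivAt_fRQPrimitive t₀ s hβ₀.ne' hcos)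
    (fun s _ => fRQ_nonneg t₀ s hβ₀.le hβ₁.le) (tendsto_fRQPrimitive_atTop t₀ hβ₀ hβ₁)

theorem lt_fRQPrimitive {β θ t₀ s : ℝ} (hβ₀ : 0 < β) (hβ₁ : β < 1)
    (hθ : θ ∈ Set.Ioo (-(π * β / 2)) (π * β / 2))
    (hs : (2 / β) * _root_.artanh (tan θ / tan (π * β / 2)) + log t₀ < s) :
    θ / (π * β) < fRQPrimitive β t₀ s := by
  have ha₀ : 0 < π * β / 2 := by positivity
  have ha₁ : π * β / 2 < π / 2 := by nlinarith [pi_pos]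
  have hθ' : θ ∈ Set.Ioo (-(π / 2)) (π / 2) := ⟨by linarith [hθ.1], by linarith [hθ.2]⟩
  have hk : 0 < tan (π * β / 2) := tan_pos_of_pos_of_lt_pi_div_two ha₀ ha₁
  have htan_lt : tan θ < tan (π * β / 2) :=
    strictMonoOn_tan hθ' ⟨by linarith, ha₁⟩ hθ.2
  have hlt_tan : -tan (π * β / 2) < tan θ := by
    rw [← tan_neg]
    exact strictMonoOn_tan ⟨by linarith, by linarith⟩ hθ' hθ.1
  have hx : tan θ / tan (π * β / 2) ∈ Set.Ioo (-1) 1 :=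
    ⟨by rw [lt_div_iff₀ hk]; linarith, by rw [div_lt_one hk]; exact htan_lt⟩
  rw [artanh_eq_real_artanh (Set.Ioo_subset_Icc_self hx)] at hs
  have hartanh : Real.artanh (tan θ / tan (π * β / 2)) < β * (s - log t₀) / 2 := by
    rw [lt_div_iff₀ two_pos]
    have := mul_lt_mul_of_pos_left (sub_lt_sub_right hs (log t₀)) hβ₀
    field_simp at this ⊢
    linarith
  have htanh := lt_tanh_of_artanh_lt hx hartanh
  rw [div_lt_iff₀ hk] at htanh
  have := arctan_strictMono htanh
  rw [arctan_tan hθ'.1 hθ'.2] at this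
  exact div_lt_div_of_pos_right this (by positivity)

theorem fRQ_upper_truncation_small_general (β t₀ δ sN : ℝ) (hβ₀ : 0 < β) (hβ₁ : β < 1)
    (hδ₀ : 0 < δ) (hδ₁ : δ < 1 / 2)
    (hsN : sN > (2 / β) * _root_.artanh (Real.tan (π * β * (1 - 2 * δ) / 2) /
      Real.tan (π * β / 2)) + Real.log t₀) :
    ∫ s in Set.Ioi sN, fRQ β t₀ s < δ := by
  have hθ : π * β * (1 - 2 * δ) / 2 ∈ Set.Ioo (-(π * β / 2)) (π * β / 2) := by
    constructor <;> nlinarith [pi_pos, mul_pos pi_pos hβ₀]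
  have hθ_div : π * β * (1 - 2 * δ) / 2 / (π * β) = 1 / 2 - δ := by
    field_simp
  rw [integral_Ioi_fRQ t₀ sN hβ₀ hβ₁]
  linarith [lt_fRQPrimitive hβ₀ hβ₁ hθ hsN]

/-- **Sufficient condition for a small upper truncation error of the RQ distribution.**
For `0 < β < 1`, `t₀ > 0`, `0 < δ < 1/2`, if
`s_N > (2/β) artanh(tan(πβ(1 − 2δ)/2)/tan(πβ/2)) + ln t₀` then
`∫_{s_N}^{∞} f_RQ(s) ds < δ`. -/
theorem fRQ_upper_truncation_small (β t₀ δ sN : ℝ) (hβ₀ : 0 < β) (hβ₁ : β < 1)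
    (ht₀ : 0 < t₀) (hδ₀ : 0 < δ) (hδ₁ : δ < 1 / 2)
    (hsN : sN > (2 / β) * _root_.artanh (Real.tan (π * β * (1 - 2 * δ) / 2) /
      Real.tan (π * β / 2)) + Real.log t₀) :
    ∫ s in Set.Ioi sN, fRQ β t₀ s < δ :=
  fRQ_upper_truncation_small_general β t₀ δ sN hβ₀ hβ₁ hδ₀ hδ₁ hsN
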